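/- arXiv:1405.2966 — 2 statements merged into one kernel-verified Lean document; each statement's English description precedes it below -/
import Mathlib

section
/- Let w ∈ S_n, b = w^ℓ ⋯ w^1 ∈ W_w^ℓ, and 1 ≤ i < ℓ. Define ε_i(b) = max{ d ≥ 0 : ẽ_i^d(b) ≠ 0 } and φ_i(b) = max{ d ≥ 0 : f̃_i^d(b) ≠ 0 }. Then ε_i(b) = |L_i(b)| and φ_i(b) = |R_i(b)|; in particular φ_i(b) − ε_i(b) = ℓ(w^i) − ℓ(w^{i+1}). -/
open scoped Classical

noncomputable section

def sT (n i : ℕ) : Equiv.Perm (Fin n) :=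
  if h : 1 ≤ i ∧ i < n then Equiv.swap ⟨i - 1, by omega⟩ ⟨i, h.2⟩ else 1

def wordProd (n : ℕ) (l : List ℕ) : Equiv.Perm (Fin n) :=
  (l.map (sT n)).prod

def len (n : ℕ) (w : Equiv.Perm (Fin n)) : ℕ :=
  sInf {k | ∃ l : List ℕ, (∀ i ∈ l, 1 ≤ i ∧ i < n) ∧ wordProd n l = w ∧ l.length = k}

def IsReducedWord (n : ℕ) (w : Equiv.Perm (Fin n)) (l : List ℕ) : Prop :=
  (∀ i ∈ l, 1 ≤ i ∧ i < n) ∧ wordProd n l = w ∧ l.length = len n w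

/-- The decreasing permutation with content `A`: product of the letters of `A`
in decreasing order. -/
def dperm (n : ℕ) (A : Finset ℕ) : Equiv.Perm (Fin n) :=
  wordProd n ((A.sort (· ≤ ·)).reverse)

/-- `c` encodes a decreasing factorization `w = wℓ ⋯ w¹` into `ℓ` decreasing factors,
where `c j` is the content of the factor `w^(j+1)` (0-indexed, so `c 0 = cont w¹`). -/
def IsDecFactorizationC (n ℓ : ℕ) (w : Equiv.Perm (Fin n)) (c : Fin ℓ → Finset ℕ) : Prop :=
  (∀ j, ∀ a ∈ c j, 1 ≤ a ∧ a < n) ∧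
    (List.ofFn fun j => dperm n (c j)).reverse.prod = w ∧
    len n w = ∑ j, (c j).card

/-- Pair the letters of the first list (the content of `w^(i+1)` in decreasing order)
with letters of the second finset (the content of `wⁱ`): each letter `b` is paired with
the smallest still unpaired `a > b`, if it exists.  Returns the pair
(unpaired letters of the first argument, unpaired letters of the second argument). -/
def pairAux : List ℕ → Finset ℕ → Finset ℕ × Finset ℕ
  | [], A => (∅, A)
  | b :: bs, A =>
    if h : (A.filter fun a => b < a).Nonempty then
      pairAux bs (A.erase ((A.filter fun a => b < a).min' h))
    else
      ((pairAux bs A).1 ∪ {b}, (pairAux bs A).2)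

/-- The unpaired letters of `cont w^(i+1)` (first argument `B`) in the
`w^(i+1) wⁱ`-pairing. -/
def Ldata (B A : Finset ℕ) : Finset ℕ :=
  (pairAux ((B.sort (· ≤ ·)).reverse) A).1

/-- The unpaired letters of `cont wⁱ` (second argument `A`) in the
`w^(i+1) wⁱ`-pairing. -/
def Rdata (B A : Finset ℕ) : Finset ℕ :=
  (pairAux ((B.sort (· ≤ ·)).reverse) A).2

/-- The raising crystal operator on a pair of contents `(B, A) = (cont w^(i+1), cont wⁱ)`. -/
def eC (B A : Finset ℕ) : Option (Finset ℕ × Finset ℕ) :=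
  if h : (Ldata B A).Nonempty then
    some (B.erase ((Ldata B A).min' h),
      insert ((Ldata B A).min' h - sInf {j | (Ldata B A).min' h - j - 1 ∉ B}) A)
  else none

/-- The lowering crystal operator on a pair of contents `(B, A) = (cont w^(i+1), cont wⁱ)`. -/
def fC (B A : Finset ℕ) : Option (Finset ℕ × Finset ℕ) :=
  if h : (Rdata B A).Nonempty then
    some (insert ((Rdata B A).max' h + sInf {j | (Rdata B A).max' h + j + 1 ∉ A}) B,
      A.erase ((Rdata B A).max' h))
  else none

/-- The crystal raising operator `ẽᵢ` (1 ≤ i < ℓ) on decreasing factorizations encoded by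
contents; it acts on the factors `w^(i+1) wⁱ`, i.e. on `c ⟨i⟩` and `c ⟨i-1⟩`. -/
def eOp {ℓ : ℕ} (i : ℕ) (c : Fin ℓ → Finset ℕ) : Option (Fin ℓ → Finset ℕ) :=
  if h : 1 ≤ i ∧ i < ℓ then
    match eC (c ⟨i, h.2⟩) (c ⟨i - 1, by omega⟩) with
    | none => none
    | some (B', A') =>
        some (Function.update (Function.update c ⟨i, h.2⟩ B') ⟨i - 1, by omega⟩ A')
  else none

/-- The crystal lowering operator `f̃ᵢ` (1 ≤ i < ℓ) on decreasing factorizations encoded by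
contents. -/
def fOp {ℓ : ℕ} (i : ℕ) (c : Fin ℓ → Finset ℕ) : Option (Fin ℓ → Finset ℕ) :=
  if h : 1 ≤ i ∧ i < ℓ then
    match fC (c ⟨i, h.2⟩) (c ⟨i - 1, by omega⟩) with
    | none => none
    | some (B', A') =>
        some (Function.update (Function.update c ⟨i, h.2⟩ B') ⟨i - 1, by omega⟩ A')
  else none

/-- `d`-fold iterate of `ẽᵢ`. -/
def eIter {ℓ : ℕ} (i : ℕ) : ℕ → (Fin ℓ → Finset ℕ) → Option (Fin ℓ → Finset ℕ)
  | 0, c => some c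
  | d + 1, c => (eOp i c).bind (eIter i d)

/-- `d`-fold iterate of `f̃ᵢ`. -/
def fIter {ℓ : ℕ} (i : ℕ) : ℕ → (Fin ℓ → Finset ℕ) → Option (Fin ℓ → Finset ℕ)
  | 0, c => some c
  | d + 1, c => (fOp i c).bind (fIter i d)

/-!
Read the letters of `B = cont w^(i+1)` as opening and those of `A = cont wⁱ` as closing
brackets, a closing bracket at `a` standing just before an opening one at `b = a`; the pairing is
then the usual matching of brackets. The excess `#{b ∈ B | v ≤ b} - #{a ∈ A | v < a}` of the
brackets to the right of `v` has maximum `|L|`, attained at `min L` and at `max R`, and only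
between them. Removing `c = min L` from `B` and adding a letter `≤ c` to `A` lowers this maximum
by exactly one. Moving `a = max R` from `A` to `a + s` in `B`, where `a+1, …, a+s ∈ A`, raises
the maximum by one if `a + s ∉ B` and leaves it alone otherwise, because the excess does not
decrease along this run; as `|B|` changes by the same amount and `|A|` drops by one,
`|R| = |L| + |A| - |B|` drops by one. Hence `ẽᵢ` and `f̃ᵢ` can be applied exactly `|L|` and
`|R|` times.
-/

open Finset

section Excess

variable {B A : Finset ℕ} {x v : ℕ}

def excess (B A : Finset ℕ) (v : ℕ) : ℤ :=
  #(B.filter (v ≤ ·)) - #(A.filter (v < ·))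

lemma excess_insert_left :
    excess (insert x B) A v = excess B A v + if x ∉ B ∧ v ≤ x then 1 else 0 := by
  unfold excess
  rw [filter_insert]
  split_ifs with hv h h
  · rw [card_insert_of_notMem fun hx => h.1 (mem_filter.1 hx).1]
    push_cast
    ring
  · rw [insert_eq_of_mem (mem_filter.2 ⟨not_not.1 fun hx => h ⟨hx, hv⟩, hv⟩)]
    ring
  · exact absurd h.2 hv
  · ring

lemma excess_erase_left :
    excess (B.erase x) A v = excess B A v - if x ∈ B ∧ v ≤ x then 1 else 0 := by
  unfold excess
  rw [filter_erase]
  split_ifs with h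
  · rw [card_erase_of_mem (mem_filter.2 h), Nat.cast_sub (card_pos.2 ⟨x, mem_filter.2 h⟩)]
    ring
  · rw [erase_eq_of_notMem fun hx => h (mem_filter.1 hx)]
    ring

lemma excess_insert_right :
    excess B (insert x A) v = excess B A v - if x ∉ A ∧ v < x then 1 else 0 := by
  unfold excess
  rw [filter_insert]
  split_ifs with hv h h
  · rw [card_insert_of_notMem fun hx => h.1 (mem_filter.1 hx).1]
    push_cast
    ring
  · rw [insert_eq_of_mem (mem_filter.2 ⟨not_not.1 fun hx => h ⟨hx, hv⟩, hv⟩)]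
    ring
  · exact absurd h.2 hv
  · ring

lemma excess_erase_right :
    excess B (A.erase x) v = excess B A v + if x ∈ A ∧ v < x then 1 else 0 := by
  unfold excess
  rw [filter_erase]
  split_ifs with h
  · rw [card_erase_of_mem (mem_filter.2 h), Nat.cast_sub (card_pos.2 ⟨x, mem_filter.2 h⟩)]
    ring
  · rw [erase_eq_of_notMem fun hx => h (mem_filter.1 hx)]
    ring

lemma excess_eq_zero (hB : ∀ b ∈ B, b < v) (hA : ∀ a ∈ A, a ≤ v) : excess B A v = 0 := by
  unfold excess
  rw [filter_false_of_mem fun b hb => not_le.2 (hB b hb),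
    filter_false_of_mem fun a ha => not_lt.2 (hA a ha)]
  simp

lemma exists_excess_eq_zero (B A : Finset ℕ) : ∃ v, excess B A v = 0 :=
  ⟨(B ∪ A).sup id + 1, excess_eq_zero
    (fun _ hb => Nat.lt_succ_of_le (le_sup (f := id) (mem_union_left A hb)))
    (fun _ ha => (le_sup (f := id) (mem_union_right B ha)).trans (Nat.le_succ _))⟩

lemma excess_le_excess_succ (hv : v + 1 ∈ A) : excess B A v ≤ excess B A (v + 1) := by
  have hB : #(B.filter (v ≤ ·)) ≤ #(B.filter (v + 1 ≤ ·)) + 1 := by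
    refine (card_le_card fun b hb => ?_).trans (card_insert_le v _)
    rw [mem_filter] at hb
    rcases hb.2.eq_or_lt with rfl | hlt
    · exact mem_insert_self _ _
    · exact mem_insert_of_mem (mem_filter.2 ⟨hb.1, hlt⟩)
  have hA : #(A.filter (v + 1 < ·)) + 1 ≤ #(A.filter (v < ·)) := by
    rw [← card_insert_of_notMem fun h => lt_irrefl _ (mem_filter.1 h).2]
    refine card_le_card (insert_subset (mem_filter.2 ⟨hv, by omega⟩) fun a ha => ?_)
    rw [mem_filter] at ha ⊢
    exact ⟨ha.1, by omega⟩
  unfold excess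
  omega

lemma excess_le_excess_add {a s : ℕ} (hrun : ∀ j < s, a + j + 1 ∈ A) :
    excess B A a ≤ excess B A (a + s) := by
  induction s with
  | zero => rfl
  | succ s ih =>
    exact (ih fun j hj => hrun j (by omega)).trans (excess_le_excess_succ (hrun s (by omega)))

end Excess

lemma reverse_sort_eq_sort_ge {α : Type*} [LinearOrder α] (s : Finset α) :
    (s.sort (· ≤ ·)).reverse = s.sort (· ≥ ·) :=
  List.Perm.eq_of_pairwise' (r := (· ≥ ·))
    (List.pairwise_reverse.2 ((s.pairwise_sort _).imp fun h => h))
    (s.pairwise_sort _)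
    ((List.reverse_perm _).trans (Multiset.coe_eq_coe.1 ((s.sort_eq _).trans (s.sort_eq _).symm)))

lemma reverse_sort_insert_of_forall_lt {α : Type*} [LinearOrder α] {B : Finset α} {b : α}
    (hb : ∀ x ∈ B, x < b) :
    ((insert b B).sort (· ≤ ·)).reverse = b :: (B.sort (· ≤ ·)).reverse := by
  rw [reverse_sort_eq_sort_ge, reverse_sort_eq_sort_ge,
    sort_insert (· ≥ ·) (fun x hx => (hb x hx).le) (fun h => lt_irrefl b (hb b h))]

structure UnpairedSpec (B A L R : Finset ℕ) : Prop where
  subset_left : L ⊆ B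
  subset_right : R ⊆ A
  card_add_card : #L + #A = #R + #B
  excess_le : ∀ v, excess B A v ≤ #L
  excess_min' : ∀ h : L.Nonempty, excess B A (L.min' h) = #L
  excess_lt_of_lt : ∀ x ∈ L, ∀ v, x < v → excess B A v < #L
  excess_max' : ∀ h : R.Nonempty, excess B A (R.max' h) = #L
  excess_lt_of_gt : ∀ x ∈ R, ∀ v < x, excess B A v < #L

namespace UnpairedSpec

variable {B A L R : Finset ℕ} {b : ℕ}

lemma empty_left (A : Finset ℕ) : UnpairedSpec ∅ A ∅ A := by
  have hE : ∀ v, excess ∅ A v = -#(A.filter (v < ·)) := by simp [excess]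
  refine ⟨empty_subset _, Subset.rfl, by simp, fun v => by simp [hE], fun h => absurd h (by simp),
    by simp, fun h => ?_, fun x hx v hv => ?_⟩
  · rw [hE, filter_false_of_mem fun a ha => not_lt.2 (le_max' A a ha)]
    simp
  · have : 0 < #(A.filter (v < ·)) := card_pos.2 ⟨x, mem_filter.2 ⟨hx, hv⟩⟩
    simp only [hE, card_empty, Nat.cast_zero]
    omega

/-- The step of the pairing in which `b` is paired with `a₀`. -/
lemma insert_of_lt {a₀ : ℕ} (hb : ∀ x ∈ B, x < b) (ha₀ : a₀ ∈ A) (hba₀ : b < a₀)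
    (hmin : ∀ a ∈ A, b < a → a₀ ≤ a) (h : UnpairedSpec B (A.erase a₀) L R) :
    UnpairedSpec (insert b B) A L R := by
  have hbB : b ∉ B := fun hbB => lt_irrefl b (hb b hbB)
  have hE : ∀ v, excess (insert b B) A v
      = excess B (A.erase a₀) v - if b < v ∧ v < a₀ then 1 else 0 := by
    intro v
    rw [excess_insert_left, excess_erase_right]
    simp only [hbB, ha₀, not_false_eq_true, true_and]
    split_ifs <;> omega
  have hE_le : ∀ v, excess (insert b B) A v ≤ excess B (A.erase a₀) v := fun v => by
    rw [hE]; split_ifs <;> omega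
  refine ⟨h.subset_left.trans (subset_insert _ _), h.subset_right.trans (erase_subset _ _),
    ?_, fun v => (hE_le v).trans (h.excess_le v), fun hL => ?_,
    fun x hx v hv => (hE_le v).trans_lt (h.excess_lt_of_lt x hx v hv), fun hR => ?_,
    fun x hx v hv => (hE_le v).trans_lt (h.excess_lt_of_gt x hx v hv)⟩
  · have := h.card_add_card
    rw [card_erase_of_mem ha₀] at this
    have : 0 < #A := card_pos.2 ⟨a₀, ha₀⟩
    rw [card_insert_of_notMem hbB]
    omega
  · have hlt : L.min' hL < b := hb _ (h.subset_left (min'_mem L hL))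
    rw [hE, if_neg (by omega), h.excess_min' hL, sub_zero]
  · obtain ⟨hne, hmem⟩ := mem_erase.1 (h.subset_right (max'_mem R hR))
    have := hmin _ hmem
    rw [hE, if_neg (by omega), h.excess_max' hR, sub_zero]

/-- The step of the pairing in which `b` stays unpaired. -/
lemma insert_of_forall_le (hb : ∀ x ∈ B, x < b) (hA : ∀ a ∈ A, a ≤ b)
    (h : UnpairedSpec B A L R) : UnpairedSpec (insert b B) A (insert b L) R := by
  have hbB : b ∉ B := fun hbB => lt_irrefl b (hb b hbB)
  have hbL : b ∉ L := fun hbL => hbB (h.subset_left hbL)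
  have hE : ∀ v, excess (insert b B) A v = excess B A v + if v ≤ b then 1 else 0 := by
    intro v
    rw [excess_insert_left]
    simp [hbB]
  have hE₀ : ∀ v, b ≤ v → excess B A v = 0 := fun v hv =>
    excess_eq_zero (fun x hx => (hb x hx).trans_le hv) (fun a ha => (hA a ha).trans hv)
  have hcard : (#(insert b L) : ℤ) = #L + 1 := by rw [card_insert_of_notMem hbL]; push_cast; rfl
  refine ⟨insert_subset_insert b h.subset_left, h.subset_right, ?_, fun v => ?_, fun hL => ?_,
    fun x hx v hv => ?_, fun hR => ?_, fun x hx v hv => ?_⟩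
  · have := h.card_add_card
    rw [card_insert_of_notMem hbL, card_insert_of_notMem hbB]
    omega
  · have := h.excess_le v
    rw [hE, hcard]
    split_ifs with hv
    · omega
    · rw [hE₀ v (by omega)]; omega
  · rcases L.eq_empty_or_nonempty with rfl | hL'
    · simp [hE, hE₀ b le_rfl]
    · have hlt : L.min' hL' < b := hb _ (h.subset_left (min'_mem L hL'))
      rw [min'_insert b L hL', min_eq_right hlt.le, hE, if_pos hlt.le, h.excess_min' hL', hcard]
  · rw [hE, hcard]
    rcases mem_insert.1 hx with rfl | hx
    · rw [if_neg (by omega), hE₀ v hv.le]; omega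
    · have := h.excess_lt_of_lt x hx v hv
      split_ifs with hvb
      · omega
      · rw [hE₀ v (by omega)]; omega
  · have := hA _ (h.subset_right (max'_mem R hR))
    rw [hE, if_pos this, h.excess_max' hR, hcard]
  · have := hA x (h.subset_right hx)
    rw [hE, if_pos (by omega), hcard]
    have := h.excess_lt_of_gt x hx v hv
    omega

lemma isGreatest_excess (h : UnpairedSpec B A L R) : IsGreatest (Set.range (excess B A)) #L := by
  refine ⟨?_, by rintro _ ⟨v, rfl⟩; exact h.excess_le v⟩
  rcases L.eq_empty_or_nonempty with rfl | hL
  · simpa [eq_comm] using exists_excess_eq_zero B A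
  · exact ⟨_, h.excess_min' hL⟩

end UnpairedSpec

theorem unpairedSpec_Ldata_Rdata (B A : Finset ℕ) : UnpairedSpec B A (Ldata B A) (Rdata B A) := by
  induction B using Finset.induction_on_max generalizing A with
  | empty => simpa [Ldata, Rdata, pairAux] using UnpairedSpec.empty_left A
  | insert b B hb ih =>
    rw [Ldata, Rdata, reverse_sort_insert_of_forall_lt hb, pairAux]
    split_ifs with h
    · obtain ⟨ha₀, hba₀⟩ := mem_filter.1 (min'_mem _ h)
      exact (ih _).insert_of_lt hb ha₀ hba₀ fun a ha hba => min'_le _ _ (mem_filter.2 ⟨ha, hba⟩)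
    · rw [union_comm, ← insert_eq]
      refine (ih A).insert_of_forall_le hb fun a ha => ?_
      by_contra hab
      exact h ⟨a, mem_filter.2 ⟨ha, by omega⟩⟩

theorem card_Ldata_erase_min'_insert {B A : Finset ℕ} (h : (Ldata B A).Nonempty) {t : ℕ}
    (ht : t ≤ (Ldata B A).min' h) :
    #(Ldata (B.erase ((Ldata B A).min' h)) (insert t A)) + 1 = #(Ldata B A) := by
  set c := (Ldata B A).min' h
  have S := unpairedSpec_Ldata_Rdata B A
  have hcB : c ∈ B := S.subset_left (min'_mem _ h)
  have hE : ∀ v, excess (B.erase c) (insert t A) v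
      = excess B A v - (if v ≤ c then 1 else 0) - if t ∉ A ∧ v < t then 1 else 0 := by
    intro v
    rw [excess_insert_right, excess_erase_left]
    simp [hcB]
  have hmax : IsGreatest (Set.range (excess (B.erase c) (insert t A))) (#(Ldata B A) - 1) := by
    refine ⟨⟨c, by rw [hE, if_pos le_rfl, if_neg (by omega), S.excess_min' h]; ring⟩, ?_⟩
    rintro _ ⟨v, rfl⟩
    have := S.excess_le v
    rw [hE]
    split_ifs with hvc
    all_goals first | omega | linarith [S.excess_lt_of_lt c (min'_mem _ h) v (by omega)]
  have := (unpairedSpec_Ldata_Rdata _ _).isGreatest_excess.unique hmax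
  omega

theorem card_Rdata_insert_erase_max' {B A : Finset ℕ} (h : (Rdata B A).Nonempty) {s : ℕ}
    (hrun : ∀ j < s, (Rdata B A).max' h + j + 1 ∈ A) :
    #(Rdata (insert ((Rdata B A).max' h + s) B) (A.erase ((Rdata B A).max' h))) + 1
      = #(Rdata B A) := by
  set a := (Rdata B A).max' h
  have S := unpairedSpec_Ldata_Rdata B A
  have S' := unpairedSpec_Ldata_Rdata (insert (a + s) B) (A.erase a)
  have haA : a ∈ A := S.subset_right (max'_mem _ h)
  have hE : ∀ v, excess (insert (a + s) B) (A.erase a) v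
      = excess B A v + (if v < a then 1 else 0) + if a + s ∉ B ∧ v ≤ a + s then 1 else 0 := by
    intro v
    rw [excess_insert_left, excess_erase_right]
    simp [haA]
  have hEs : excess B A (a + s) = #(Ldata B A) :=
    le_antisymm (S.excess_le _) (S.excess_max' h ▸ excess_le_excess_add hrun)
  have hmax : IsGreatest (Set.range (excess (insert (a + s) B) (A.erase a)))
      (#(Ldata B A) + if a + s ∈ B then 0 else 1) := by
    refine ⟨⟨a + s, by rw [hE, hEs, if_neg (by omega)]; split_ifs <;> simp_all⟩, ?_⟩
    rintro _ ⟨v, rfl⟩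
    have := S.excess_le v
    rw [hE]
    split_ifs
    all_goals first | tauto | omega | linarith [S.excess_lt_of_gt a (max'_mem _ h) v (by omega)]
  have hL := S'.isGreatest_excess.unique hmax
  have hc := S.card_add_card
  have hc' := S'.card_add_card
  rw [card_erase_of_mem haA, card_insert_eq_ite] at hc'
  have : 0 < #A := card_pos.2 ⟨a, haA⟩
  split_ifs at hL hc' <;> omega

theorem sSup_setOf_isSome_iterate_eq {α : Type*} (op : α → Option α) (it : ℕ → α → Option α)
    (μ : α → ℕ) (it_zero : ∀ x, it 0 x = some x)
    (it_succ : ∀ d x, it (d + 1) x = (op x).bind (it d))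
    (op_eq_none : ∀ x, μ x = 0 → op x = none)
    (exists_op_eq_some : ∀ x, μ x ≠ 0 → ∃ y, op x = some y ∧ μ y + 1 = μ x) (x : α) :
    sSup {d | (it d x).isSome} = μ x := by
  suffices h : ∀ d x, (it d x).isSome ↔ d ≤ μ x by
    simp_rw [h]
    exact csSup_Iic
  intro d
  induction d with
  | zero => simp [it_zero]
  | succ d ih =>
    intro x
    by_cases hx : μ x = 0
    · simp [it_succ, op_eq_none x hx, hx]
    · obtain ⟨y, hy, hμ⟩ := exists_op_eq_some x hx
      rw [it_succ, hy, Option.bind_some, ih]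
      omega

section Operators

variable {ℓ i : ℕ} {c : Fin ℓ → Finset ℕ}

lemma eOp_eq_none (hi : 1 ≤ i) (hiℓ : i < ℓ)
    (h : #(Ldata (c ⟨i, hiℓ⟩) (c ⟨i - 1, Nat.sub_lt_of_lt hiℓ⟩)) = 0) : eOp i c = none := by
  rw [eOp, dif_pos ⟨hi, hiℓ⟩, eC, dif_neg (by simpa using h)]

lemma fOp_eq_none (hi : 1 ≤ i) (hiℓ : i < ℓ)
    (h : #(Rdata (c ⟨i, hiℓ⟩) (c ⟨i - 1, Nat.sub_lt_of_lt hiℓ⟩)) = 0) : fOp i c = none := by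
  rw [fOp, dif_pos ⟨hi, hiℓ⟩, fC, dif_neg (by simpa using h)]

lemma exists_eOp_eq_some (hi : 1 ≤ i) (hiℓ : i < ℓ)
    (h : #(Ldata (c ⟨i, hiℓ⟩) (c ⟨i - 1, Nat.sub_lt_of_lt hiℓ⟩)) ≠ 0) :
    ∃ c', eOp i c = some c' ∧ #(Ldata (c' ⟨i, hiℓ⟩) (c' ⟨i - 1, Nat.sub_lt_of_lt hiℓ⟩)) + 1
      = #(Ldata (c ⟨i, hiℓ⟩) (c ⟨i - 1, Nat.sub_lt_of_lt hiℓ⟩)) := by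
  have hne := card_ne_zero.1 h
  have hidx : (⟨i, hiℓ⟩ : Fin ℓ) ≠ ⟨i - 1, Nat.sub_lt_of_lt hiℓ⟩ := 
    Fin.ne_of_val_ne (show i ≠ i - 1 by omega)
  refine ⟨_, by rw [eOp, dif_pos ⟨hi, hiℓ⟩, eC, dif_pos hne], ?_⟩
  rw [Function.update_self, Function.update_of_ne hidx, Function.update_self]
  exact card_Ldata_erase_min'_insert hne (Nat.sub_le _ _)

lemma exists_fOp_eq_some (hi : 1 ≤ i) (hiℓ : i < ℓ)
    (h : #(Rdata (c ⟨i, hiℓ⟩) (c ⟨i - 1, Nat.sub_lt_of_lt hiℓ⟩)) ≠ 0) :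
    ∃ c', fOp i c = some c' ∧ #(Rdata (c' ⟨i, hiℓ⟩) (c' ⟨i - 1, Nat.sub_lt_of_lt hiℓ⟩)) + 1
      = #(Rdata (c ⟨i, hiℓ⟩) (c ⟨i - 1, Nat.sub_lt_of_lt hiℓ⟩)) := by
  have hne := card_ne_zero.1 h
  have hidx : (⟨i, hiℓ⟩ : Fin ℓ) ≠ ⟨i - 1, Nat.sub_lt_of_lt hiℓ⟩ := 
    Fin.ne_of_val_ne (show i ≠ i - 1 by omega)
  refine ⟨_, by rw [fOp, dif_pos ⟨hi, hiℓ⟩, fC, dif_pos hne], ?_⟩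
  rw [Function.update_self, Function.update_of_ne hidx, Function.update_self]
  exact card_Rdata_insert_erase_max' hne fun j hj => by
    by_contra hj'
    exact Nat.notMem_of_lt_sInf hj hj'

end Operators

theorem eps_phi_eq_card (ℓ : ℕ) (c : Fin ℓ → Finset ℕ)
    (i : ℕ) (hi : 1 ≤ i) (hiℓ : i < ℓ) :
    sSup {d : ℕ | (eIter i d c).isSome} = (Ldata (c ⟨i, hiℓ⟩) (c ⟨i - 1, by omega⟩)).card ∧
    sSup {d : ℕ | (fIter i d c).isSome} = (Rdata (c ⟨i, hiℓ⟩) (c ⟨i - 1, by omega⟩)).card ∧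
    (Nat.cast (R := ℤ) (sSup {d : ℕ | (fIter i d c).isSome}) -
        Nat.cast (R := ℤ) (sSup {d : ℕ | (eIter i d c).isSome})) =
      ((c ⟨i - 1, by omega⟩).card : ℤ) - ((c ⟨i, hiℓ⟩).card : ℤ) := by
  have hε := sSup_setOf_isSome_iterate_eq (eOp i) (eIter i) _ (fun _ => rfl) (fun _ _ => rfl)
    (fun _ => eOp_eq_none hi hiℓ) (fun _ => exists_eOp_eq_some hi hiℓ) c
  have hφ := sSup_setOf_isSome_iterate_eq (fOp i) (fIter i) _ (fun _ => rfl) (fun _ _ => rfl)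
    (fun _ => fOp_eq_none hi hiℓ) (fun _ => exists_fOp_eq_some hi hiℓ) c
  have hcard :=
    (unpairedSpec_Ldata_Rdata (c ⟨i, hiℓ⟩) (c ⟨i - 1, Nat.sub_lt_of_lt hiℓ⟩)).card_add_card
  refine ⟨hε, hφ, ?_⟩
  rw [hε, hφ]
  omega

end
end

section
/- Let w_0 be the longest element of S_n and let ℓ ≥ n−1. The unique decreasing factorization b ∈ W_{w_0}^ℓ satisfying ẽ_i(b) = 0 for all 1 ≤ i < ℓ is b = w^ℓ ⋯ w^1, where w^j = s_{n−j} s_{n−j−1} ⋯ s_1 (the decreasing permutation of content {1,…,n−j}) for 1 ≤ j ≤ n−1, and w^j is the identity for n−1 < j ≤ ℓ; its weight is the staircase partition (n−1, n−2, …, 1) padded with zeros. -/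
open scoped Classical

noncomputable section

lemma wordProd_nil (n : ℕ) : wordProd n [] = 1 := rfl

lemma wordProd_cons (n i : ℕ) (l : List ℕ) :
    wordProd n (i :: l) = sT n i * wordProd n l := by
  simp [wordProd]

lemma wordProd_append (n : ℕ) (l1 l2 : List ℕ) :
    wordProd n (l1 ++ l2) = wordProd n l1 * wordProd n l2 := by
  simp [wordProd]

lemma sortIcc (m : ℕ) : (Finset.Icc 1 m).sort (· ≤ ·) = List.range' 1 m := by
  refine (fun hp h1 h2 => List.Perm.eq_of_pairwise' (r := (· ≤ ·)) h1 h2 hp) ?_ ?_ ?_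
  · apply List.perm_of_nodup_nodup_toFinset_eq
    · exact Finset.sort_nodup _ _
    · exact List.nodup_range' 1
    · ext a
      simp [Finset.mem_Icc, List.mem_range'_1]
      omega
  · exact Finset.pairwise_sort _ _
  · have := @List.pairwise_lt_range' 1 m 1 (by omega)
    exact this.imp (fun h => le_of_lt h)

/-- `[m, m-1, ..., 1]` -/
def decList (m : ℕ) : List ℕ := (List.range' 1 m).reverse

lemma decList_succ (m : ℕ) : decList (m + 1) = (m + 1) :: decList m := by
  simp [decList, List.range'_1_concat, Nat.add_comm]

lemma sort_reverse_Icc (m : ℕ) :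
    ((Finset.Icc 1 m).sort (· ≤ ·)).reverse = decList m := by
  rw [sortIcc]; rfl

def Cperm (n m : ℕ) (h : m < n) : Equiv.Perm (Fin n) where
  toFun x := if x.val = 0 then ⟨m, h⟩ else if x.val ≤ m then ⟨x.val - 1, Nat.lt_of_le_of_lt (Nat.sub_le _ _) x.2⟩ else x
  invFun x := if x.val = m then ⟨0, by omega⟩ else if h2 : x.val < m then ⟨x.val + 1, by omega⟩ else x
  left_inv := by
    intro x
    dsimp only
    split_ifs <;> (apply Fin.ext) <;> simp_all <;> omega
  right_inv := by
    intro x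
    dsimp only
    split_ifs <;> (apply Fin.ext) <;> simp_all <;> omega

def Rperm (n m : ℕ) (h : m < n) : Equiv.Perm (Fin n) :=
  Function.Involutive.toPerm
    (fun x => if x.val ≤ m then ⟨m - x.val, by omega⟩ else x)
    (by intro x; by_cases h1 : x.val ≤ m <;> simp [h1] <;> (try split_ifs) <;>
          (try apply Fin.ext) <;> simp_all <;> omega)

lemma Rperm_apply (n m : ℕ) (h : m < n) (x : Fin n) :
    Rperm n m h x = if x.val ≤ m then ⟨m - x.val, by omega⟩ else x := rfl

lemma Rperm_last (n : ℕ) (h : 1 ≤ n) :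
    Rperm n (n-1) (by omega) = Fin.revPerm := by
  apply Equiv.ext; intro x
  rw [Rperm_apply]
  have : x.val ≤ n - 1 := by omega
  simp [this, Fin.rev]
  omega

lemma Cprod (n : ℕ) : ∀ m (h : m < n), wordProd n (decList m) = Cperm n m h := by
  intro m
  induction m with
  | zero =>
    intro h
    apply Equiv.ext; intro x
    simp [decList, wordProd_nil, Cperm, Equiv.coe_fn_mk]
    split_ifs <;> (apply Fin.ext) <;> simp_all
  | succ m ih =>
    intro h
    rw [decList_succ, wordProd_cons, ih (by omega)]
    apply Equiv.ext; intro x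
    have hs : sT n (m+1) = Equiv.swap ⟨m, by omega⟩ ⟨m+1, by omega⟩ := by
      rw [sT, dif_pos ⟨by omega, h⟩]
      congr 1
    rw [Equiv.Perm.mul_apply, hs]
    simp only [Cperm, Equiv.coe_fn_mk, Equiv.swap_apply_def]
    split_ifs <;>
      first
        | rfl
        | (apply Fin.ext; simp_all [Fin.ext_iff]; omega)
        | (apply Fin.ext; simp_all [Fin.ext_iff])
        | (apply Fin.ext; omega)
        | (exfalso; simp_all [Fin.ext_iff]; omega)
        | (exfalso; simp_all [Fin.ext_iff])

/-- staircase word: `decList 1 ++ decList 2 ++ ... ++ decList m` -/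
def stair : ℕ → List ℕ
  | 0 => []
  | m + 1 => stair m ++ decList (m + 1)

lemma stair_length (m : ℕ) : (stair m).length * 2 = m * (m + 1) := by
  induction m with
  | zero => rfl
  | succ m ih =>
    simp only [stair, List.length_append, decList, List.length_reverse,
      List.length_range']
    have h2 : (m+1)*(m+1+1) = m*(m+1) + 2*(m+1) := by ring
    omega

lemma stair_mem (m : ℕ) : ∀ i ∈ stair m, 1 ≤ i ∧ i ≤ m := by
  induction m with
  | zero => intro i hi; simp [stair] at hi
  | succ m ih =>
    intro i hi
    simp [stair, decList, List.mem_range'_1] at hi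
    rcases hi with hi | hi
    · have := ih i hi; omega
    · omega

lemma stairProd (n : ℕ) : ∀ m (h : m < n), wordProd n (stair m) = Rperm n m h := by
  intro m
  induction m with
  | zero =>
    intro h
    apply Equiv.ext; intro x
    show x = Rperm n 0 h x
    rw [Rperm_apply]
    split_ifs with h0
    · apply Fin.ext; simp; omega
    · rfl
  | succ m ih =>
    intro h
    rw [stair, wordProd_append, ih (by omega), Cprod n (m+1) h]
    apply Equiv.ext; intro x
    rw [Equiv.Perm.mul_apply, Rperm_apply, Rperm_apply]
    simp only [Cperm, Equiv.coe_fn_mk]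
    split_ifs <;>
      first
        | rfl
        | (apply Fin.ext; simp_all [Fin.ext_iff]; omega)
        | (apply Fin.ext; simp_all [Fin.ext_iff])
        | (apply Fin.ext; omega)
        | (exfalso; simp_all [Fin.ext_iff]; omega)
        | (exfalso; simp_all [Fin.ext_iff])

def inv (n : ℕ) (w : Equiv.Perm (Fin n)) : ℕ :=
  (Finset.univ.filter fun p : Fin n × Fin n => p.1 < p.2 ∧ w p.2 < w p.1).card

lemma swap_adj_lt (n a : ℕ) (h : a + 1 < n) (x y : Fin n)
    (hxy : (Equiv.swap ⟨a, by omega⟩ ⟨a+1, h⟩) x < (Equiv.swap ⟨a, by omega⟩ ⟨a+1, h⟩) y) :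
    x < y ∨ (y.val = a ∧ x.val = a + 1) := by
  rw [Equiv.swap_apply_def, Equiv.swap_apply_def] at hxy
  split_ifs at hxy <;>
    simp only [Fin.lt_def, Fin.ext_iff, Fin.val_mk] at * <;> omega

lemma inv_mul_sT_le (n i : ℕ) (w : Equiv.Perm (Fin n)) :
    inv n (sT n i * w) ≤ inv n w + 1 := by
  by_cases hv : 1 ≤ i ∧ i < n
  · have hi : i - 1 + 1 < n := by omega
    have hs : sT n i = Equiv.swap ⟨i - 1, by omega⟩ ⟨i - 1 + 1, hi⟩ := by
      rw [sT, dif_pos hv]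
      congr 1
      simp only [Fin.mk.injEq]
      omega
    set a : Fin n := ⟨i - 1, by omega⟩
    set b : Fin n := ⟨i - 1 + 1, hi⟩
    have hsub : (Finset.univ.filter fun p : Fin n × Fin n =>
        p.1 < p.2 ∧ (sT n i * w) p.2 < (sT n i * w) p.1) ⊆
        insert (w⁻¹ a, w⁻¹ b)
          (Finset.univ.filter fun p : Fin n × Fin n => p.1 < p.2 ∧ w p.2 < w p.1) := by
      intro p hp
      simp only [Finset.mem_filter, Finset.mem_univ, true_and] at hp
      obtain ⟨h12, hlt⟩ := hp
      rw [Equiv.Perm.mul_apply, Equiv.Perm.mul_apply, hs] at hlt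
      rcases swap_adj_lt n (i-1) hi (w p.2) (w p.1) hlt with hc | ⟨hc1, hc2⟩
      · apply Finset.mem_insert_of_mem
        simp only [Finset.mem_filter, Finset.mem_univ, true_and]
        exact ⟨h12, hc⟩
      · apply Finset.mem_insert.2
        left
        have e1 : w p.1 = a := Fin.ext hc1
        have e2 : w p.2 = b := Fin.ext hc2
        have : p.1 = w⁻¹ a := by rw [← e1]; simp
        have : p.2 = w⁻¹ b := by rw [← e2]; simp
        ext <;> simp_all
    calc inv n (sT n i * w) ≤ (insert (w⁻¹ a, w⁻¹ b)
          (Finset.univ.filter fun p : Fin n × Fin n => p.1 < p.2 ∧ w p.2 < w p.1)).card :=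
        Finset.card_le_card hsub
      _ ≤ inv n w + 1 := Finset.card_insert_le _ _
  · rw [sT, dif_neg hv, one_mul]
    omega

lemma inv_wordProd_le (n : ℕ) (l : List ℕ) : inv n (wordProd n l) ≤ l.length := by
  induction l with
  | nil =>
    have : inv n (wordProd n []) = 0 := by
      rw [wordProd_nil]
      simp only [inv]
      rw [Finset.card_eq_zero]
      apply Finset.filter_false_of_mem
      intro p _
      simp only [Equiv.Perm.one_apply]
      rintro ⟨h1, h2⟩
      exact absurd h1 (not_lt.2 h2.le)
    omega
  | cons i l ih =>
    rw [wordProd_cons]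
    calc inv n (sT n i * wordProd n l) ≤ inv n (wordProd n l) + 1 := inv_mul_sT_le n i _
      _ ≤ l.length + 1 := by omega
      _ = (i :: l).length := by simp

lemma inv_rev (n : ℕ) : inv n (Fin.revPerm : Equiv.Perm (Fin n)) * 2 = n * n - n := by
  have hfil : (Finset.univ.filter fun p : Fin n × Fin n =>
      p.1 < p.2 ∧ Fin.revPerm p.2 < Fin.revPerm p.1) =
      Finset.univ.filter fun p : Fin n × Fin n => p.1 < p.2 := by
    apply Finset.filter_congr
    intro p _
    have h1 := p.1.isLt
    have h2 := p.2.isLt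
    simp only [Fin.revPerm_apply, Fin.lt_def, Fin.val_rev]
    omega
  have hswap : (Finset.univ.filter fun p : Fin n × Fin n => p.2 < p.1).card =
      (Finset.univ.filter fun p : Fin n × Fin n => p.1 < p.2).card := by
    have himg : (Finset.univ.filter fun p : Fin n × Fin n => p.2 < p.1) =
        (Finset.univ.filter fun p : Fin n × Fin n => p.1 < p.2).image Prod.swap := by
      ext q
      simp only [Finset.mem_filter, Finset.mem_univ, true_and, Finset.mem_image]
      constructor
      · intro hq; exact ⟨q.swap, by simpa using hq, by simp⟩
      · rintro ⟨p, hp, rfl⟩; simpa using hp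
    rw [himg, Finset.card_image_of_injective _ Prod.swap_injective]
  have hunion : (Finset.univ.filter fun p : Fin n × Fin n => p.1 < p.2) ∪
      (Finset.univ.filter fun p : Fin n × Fin n => p.2 < p.1) =
      (Finset.univ : Finset (Fin n)).offDiag := by
    ext p
    simp only [Finset.mem_union, Finset.mem_filter, Finset.mem_univ, true_and,
      Finset.mem_offDiag, ne_eq, Fin.lt_def, Fin.ext_iff]
    omega
  have hdisj : Disjoint (Finset.univ.filter fun p : Fin n × Fin n => p.1 < p.2)
      (Finset.univ.filter fun p : Fin n × Fin n => p.2 < p.1) := by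
    rw [Finset.disjoint_left]
    intro p hp1 hp2
    simp only [Finset.mem_filter] at *
    exact absurd hp2.2 (not_lt.2 hp1.2.le)
  have hcard := Finset.card_union_of_disjoint hdisj
  rw [hunion] at hcard
  have hoff : (Finset.univ : Finset (Fin n)).offDiag.card = n * n - n := by
    rw [Finset.offDiag_card]
    simp
  rw [inv, hfil]
  omega

lemma stair_word_prod (n : ℕ) (hn : 1 ≤ n) :
    wordProd n (stair (n-1)) = (Fin.revPerm : Equiv.Perm (Fin n)) := by
  rw [stairProd n (n-1) (by omega), Rperm_last n hn]

lemma len_rev2 (n : ℕ) (hn : 1 ≤ n) :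
    len n (Fin.revPerm : Equiv.Perm (Fin n)) * 2 = n * (n - 1) := by
  have hmem : (stair (n-1)).length ∈ {k | ∃ l : List ℕ,
      (∀ i ∈ l, 1 ≤ i ∧ i < n) ∧ wordProd n l = (Fin.revPerm : Equiv.Perm (Fin n)) ∧
      l.length = k} := by
    refine ⟨stair (n-1), ?_, stair_word_prod n hn, rfl⟩
    intro i hi
    have := stair_mem (n-1) i hi
    omega
  have hne : {k | ∃ l : List ℕ,
      (∀ i ∈ l, 1 ≤ i ∧ i < n) ∧ wordProd n l = (Fin.revPerm : Equiv.Perm (Fin n)) ∧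
      l.length = k}.Nonempty := ⟨_, hmem⟩
  have h1 : len n (Fin.revPerm : Equiv.Perm (Fin n)) ≤ (stair (n-1)).length :=
    Nat.sInf_le hmem
  have h2 := Nat.sInf_mem hne
  obtain ⟨l, hl, hp, hlen⟩ := h2
  have h3 : inv n (Fin.revPerm : Equiv.Perm (Fin n)) ≤ l.length := by
    rw [← hp]; exact inv_wordProd_le n l
  have h4 := inv_rev n
  have h5 := stair_length (n-1)
  have hln : l.length = len n (Fin.revPerm : Equiv.Perm (Fin n)) := hlen
  have h6 : (n - 1) * (n - 1 + 1) + n = n * n := by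
    cases n with
    | zero => simp
    | succ m => simp only [Nat.succ_sub_one]; ring
  have h7 : n * (n - 1) + n = n * n := by
    cases n with
    | zero => simp
    | succ m => simp only [Nat.succ_sub_one]; ring
  unfold len
  omega


lemma pair_card (x : ℕ) : ∀ (bs : List ℕ) (A : Finset ℕ), (pairAux bs A).1 = ∅ →
    (bs.filter (fun b => decide (x ≤ b))).length ≤ (A.filter (fun a => x < a)).card := by
  intro bs
  induction bs with
  | nil => intro A _; simp
  | cons b bs ih =>
    intro A hA
    rw [pairAux] at hA
    by_cases h : (A.filter fun a => b < a).Nonempty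
    · rw [dif_pos h] at hA
      set a0 := (A.filter fun a => b < a).min' h with ha0
      have ha0mem : a0 ∈ A.filter fun a => b < a := Finset.min'_mem _ h
      rw [Finset.mem_filter] at ha0mem
      have ihA := ih (A.erase a0) hA
      rw [List.filter_cons]
      by_cases hx : x ≤ b
      · simp only [hx, decide_eq_true_eq, if_pos, List.length_cons]
        have hmem : a0 ∈ A.filter fun a => x < a := by
          rw [Finset.mem_filter]
          exact ⟨ha0mem.1, by omega⟩
        have herase : ((A.erase a0).filter fun a => x < a) =
            (A.filter fun a => x < a).erase a0 := Finset.filter_erase _ _ _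
        rw [herase] at ihA
        have := Finset.card_erase_of_mem hmem
        have hpos : 0 < (A.filter fun a => x < a).card := Finset.card_pos.2 ⟨a0, hmem⟩
        omega
      · rw [if_neg (by simpa using hx)]
        calc (bs.filter (fun b => decide (x ≤ b))).length
            ≤ ((A.erase a0).filter fun a => x < a).card := ihA
          _ ≤ (A.filter fun a => x < a).card :=
            Finset.card_le_card (Finset.filter_subset_filter _ (Finset.erase_subset _ _))
    · rw [dif_neg h] at hA
      exfalso
      have hA' : (pairAux bs A).1 ∪ {b} = ∅ := hA
      have : b ∈ ((pairAux bs A).1 ∪ {b}) := by simp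
      rw [hA'] at this
      simp at this

lemma bridge (B : Finset ℕ) (p : ℕ → Prop) [DecidablePred p] :
    (((B.sort (· ≤ ·)).reverse).filter (fun b => decide (p b))).length = (B.filter p).card := by
  have h1 : List.Perm ((B.sort (· ≤ ·)).reverse.filter (fun b => decide (p b)))
      (B.toList.filter (fun b => decide (p b))) :=
    ((List.reverse_perm _).trans (Finset.sort_perm_toList _ _)).filter _
  rw [h1.length_eq]
  have h2 : List.Perm (B.toList.filter (fun b => decide (p b))) (B.filter p).toList := by
    apply List.perm_of_nodup_nodup_toFinset_eq
    · exact (Finset.nodup_toList B).filter _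
    · exact Finset.nodup_toList _
    · ext a
      simp [List.mem_filter, Finset.mem_toList, Finset.mem_filter]
  rw [h2.length_eq, Finset.length_toList]

lemma Ldata_empty_card (B A : Finset ℕ) (h : Ldata B A = ∅) (x : ℕ) :
    (B.filter fun b => x ≤ b).card ≤ (A.filter fun a => x < a).card := by
  rw [← bridge B (fun b => x ≤ b)]
  exact pair_card x _ A h

lemma pairone : ∀ m : ℕ, (pairAux (decList m) (Finset.Icc 1 (m+1))).1 = ∅ := by
  intro m
  induction m with
  | zero => rfl
  | succ m ih =>
    rw [decList_succ, pairAux]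
    have hfil : ((Finset.Icc 1 (m+1+1)).filter fun a => m + 1 < a) = {m+2} := by
      ext a
      simp only [Finset.mem_filter, Finset.mem_Icc, Finset.mem_singleton]
      omega
    rw [hfil]
    rw [dif_pos (Finset.singleton_nonempty _)]
    have hmin : ({m+2} : Finset ℕ).min' (Finset.singleton_nonempty _) = m + 2 :=
      Finset.min'_singleton _
    rw [hmin]
    have herase : (Finset.Icc 1 (m+1+1)).erase (m+2) = Finset.Icc 1 (m+1) := by
      ext a
      simp only [Finset.mem_erase, Finset.mem_Icc]
      omega
    rw [herase]
    exact ih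

lemma Ldata_stair (m : ℕ) : Ldata (Finset.Icc 1 m) (Finset.Icc 1 (m+1)) = ∅ := by
  rw [Ldata, sort_reverse_Icc]
  exact pairone m

lemma Ldata_empty_left (A : Finset ℕ) : Ldata ∅ A = ∅ := by
  rw [Ldata]
  simp [pairAux]

lemma eC_none_iff (B A : Finset ℕ) : eC B A = none ↔ Ldata B A = ∅ := by
  rw [eC]
  constructor
  · intro h
    by_contra hne
    rw [dif_pos (Finset.nonempty_iff_ne_empty.2 hne)] at h
    exact Option.some_ne_none _ h
  · intro h
    rw [dif_neg]
    rw [h]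
    simp
lemma eOp_none_iff {ℓ : ℕ} (i : ℕ) (c : Fin ℓ → Finset ℕ) (h1 : 1 ≤ i) (h2 : i < ℓ) :
    eOp i c = none ↔ Ldata (c ⟨i, h2⟩) (c ⟨i - 1, Nat.lt_of_le_of_lt (Nat.sub_le i 1) h2⟩) = ∅ := by
  rw [eOp, dif_pos ⟨h1, h2⟩, ← eC_none_iff]
  cases hec : eC (c ⟨i, h2⟩) (c ⟨i - 1, by omega⟩) with
  | none => simp
  | some p =>
    cases p with
    | mk B' A' => simp


lemma dperm_Icc (n m : ℕ) : dperm n (Finset.Icc 1 m) = wordProd n (decList m) := by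
  rw [dperm, sort_reverse_Icc]

lemma prodStair (n : ℕ) : ∀ ℓ m : ℕ, m ≤ ℓ →
    (List.ofFn fun j : Fin ℓ => wordProd n (decList (m - j.1))).reverse.prod =
      wordProd n (stair m) := by
  intro ℓ
  induction ℓ with
  | zero =>
    intro m hm
    have : m = 0 := by omega
    subst this
    simp [stair, wordProd_nil]
  | succ ℓ ih =>
    intro m hm
    rw [List.ofFn_succ]
    have hfun : (fun i : Fin ℓ => wordProd n (decList (m - (i.succ).1))) =
        fun i : Fin ℓ => wordProd n (decList (m - 1 - i.1)) := by
      funext i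
      have : m - (i.succ).1 = m - 1 - i.1 := by rw [Fin.val_succ]; omega
      rw [this]
    rw [hfun]
    rw [List.reverse_cons, List.prod_append, ih (m-1) (by omega)]
    simp only [List.prod_cons, List.prod_nil, Fin.val_zero, Nat.sub_zero, mul_one]
    cases m with
    | zero => simp [stair, decList, wordProd_nil]
    | succ m =>
      rw [show m + 1 - 1 = m by omega]
      rw [stair, wordProd_append]

lemma sumStair : ∀ ℓ m : ℕ, m ≤ ℓ → (∑ j : Fin ℓ, (m - j.1)) * 2 = m * (m + 1) := by
  intro ℓ
  induction ℓ with
  | zero =>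
    intro m hm
    have : m = 0 := by omega
    subst this
    simp
  | succ ℓ ih =>
    intro m hm
    rw [Fin.sum_univ_succ]
    have hfun : ∀ i : Fin ℓ, m - (i.succ).1 = m - 1 - i.1 := by
      intro i; rw [Fin.val_succ]; omega
    rw [Finset.sum_congr rfl (fun i _ => hfun i)]
    have := ih (m - 1) (by omega)
    have hm2 : m * (m + 1) = (m - 1) * (m - 1 + 1) + 2 * m := by
      cases m with
      | zero => simp
      | succ k => simp only [Nat.succ_sub_one]; ring
    simp only [Fin.val_zero, Nat.sub_zero]
    omega

lemma len_rev_sum (n ℓ : ℕ) (hn : 1 ≤ n) (hℓ : n - 1 ≤ ℓ) :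
    len n (Fin.revPerm : Equiv.Perm (Fin n)) = ∑ j : Fin ℓ, (n - 1 - j.1) := by
  have h1 := len_rev2 n hn
  have h2 := sumStair ℓ (n-1) hℓ
  have h3 : (n - 1) * (n - 1 + 1) = n * (n - 1) := by
    rw [show n - 1 + 1 = n by omega, Nat.mul_comm]
  omega

lemma staircase_fact (n ℓ : ℕ) (hn : 1 ≤ n) (hℓ : n - 1 ≤ ℓ) :
    IsDecFactorizationC n ℓ (Fin.revPerm : Equiv.Perm (Fin n))
      (fun j : Fin ℓ => Finset.Icc 1 (n - 1 - j.1)) := by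
  refine ⟨?_, ?_, ?_⟩
  · intro j a ha
    rw [Finset.mem_Icc] at ha
    omega
  · have hfun : (fun j : Fin ℓ => dperm n (Finset.Icc 1 (n - 1 - j.1))) =
        fun j : Fin ℓ => wordProd n (decList (n - 1 - j.1)) := by
      funext j; exact dperm_Icc n _
    rw [hfun, prodStair n ℓ (n-1) hℓ, stair_word_prod n hn]
  · rw [len_rev_sum n ℓ hn hℓ]
    apply Finset.sum_congr rfl
    intro j _
    rw [Nat.card_Icc]
    omega


set_option maxHeartbeats 2000000 in
lemma uniq (n ℓ : ℕ) (hn : 1 ≤ n) (hℓ : n - 1 ≤ ℓ) (c : Fin ℓ → Finset ℕ)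
    (hfact : IsDecFactorizationC n ℓ (Fin.revPerm : Equiv.Perm (Fin n)) c)
    (hE : ∀ i : ℕ, 1 ≤ i → i < ℓ → eOp i c = none) :
    c = fun j : Fin ℓ => Finset.Icc 1 (n - 1 - j.1) := by
  rcases Nat.eq_zero_or_pos ℓ with hz | hℓ0
  · subst hz; funext j; exact j.elim0
  obtain ⟨hlet, hprod, hlen⟩ := hfact
  have step : ∀ (j : ℕ) (h1 : 1 ≤ j) (h2 : j < ℓ) (x : ℕ),
      ((c ⟨j, h2⟩).filter fun b => x ≤ b).card ≤
        ((c ⟨j - 1, Nat.lt_of_le_of_lt (Nat.sub_le j 1) h2⟩).filter fun b => x + 1 ≤ b).card := by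
    intro j h1 h2 x
    have hld := (eOp_none_iff j c h1 h2).1 (hE j h1 h2)
    have hcc := Ldata_empty_card _ _ hld x
    have hfeq : ((c ⟨j - 1, Nat.lt_of_le_of_lt (Nat.sub_le j 1) h2⟩).filter fun a => x < a) =
        ((c ⟨j - 1, Nat.lt_of_le_of_lt (Nat.sub_le j 1) h2⟩).filter fun a => x + 1 ≤ a) := by
      apply Finset.filter_congr
      intro a _
      constructor <;> (intro; omega)
    rw [hfeq] at hcc
    exact hcc
  have chain : ∀ (j : ℕ) (h2 : j < ℓ) (x : ℕ),
      ((c ⟨j, h2⟩).filter fun b => x ≤ b).card ≤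
        ((c ⟨0, hℓ0⟩).filter fun b => x + j ≤ b).card := by
    intro j
    induction j with
    | zero => intro h2 x; exact le_rfl
    | succ j ihj =>
      intro h2 x
      have hs := step (j+1) (by omega) h2 x
      have hidx : (⟨j + 1 - 1, Nat.lt_of_le_of_lt (Nat.sub_le (j+1) 1) h2⟩ : Fin ℓ) = ⟨j, Nat.lt_of_succ_lt h2⟩ := by
        apply Fin.ext; simp
      rw [hidx] at hs
      have h3 := ihj (Nat.lt_of_succ_lt h2) (x+1)
      have harith : x + 1 + j = x + (j + 1) := by omega
      rw [harith] at h3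
      exact le_trans hs h3
  have hzero_le : ∀ y : ℕ, ((c ⟨0, hℓ0⟩).filter fun b => y ≤ b).card ≤ n - y := by
    intro y
    have hsub : ((c ⟨0, hℓ0⟩).filter fun b => y ≤ b) ⊆ Finset.Icc y (n-1) := by
      intro b hb
      rw [Finset.mem_filter] at hb
      rw [Finset.mem_Icc]
      have := hlet ⟨0, hℓ0⟩ b hb.1
      exact ⟨hb.2, by omega⟩
    calc ((c ⟨0, hℓ0⟩).filter fun b => y ≤ b).card ≤ (Finset.Icc y (n-1)).card :=
        Finset.card_le_card hsub
      _ ≤ n - y := by rw [Nat.card_Icc]; omega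
  have hcardle : ∀ (j : ℕ) (h2 : j < ℓ), (c ⟨j, h2⟩).card ≤ n - 1 - j := by
    intro j h2
    have h0 : (c ⟨j, h2⟩).filter (fun b => 1 ≤ b) = c ⟨j, h2⟩ :=
      Finset.filter_true_of_mem (fun b hb => (hlet _ b hb).1)
    have h4 := chain j h2 1
    have h5 := hzero_le (1 + j)
    rw [h0] at h4
    omega
  have hsum : ∑ j : Fin ℓ, (c j).card = ∑ j : Fin ℓ, (n - 1 - j.1) := by
    rw [← hlen]
    exact len_rev_sum n ℓ hn hℓ
  have hcardeq : ∀ j : Fin ℓ, (c j).card = n - 1 - j.1 := by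
    by_contra hcon
    push_neg at hcon
    obtain ⟨j0, hj0⟩ := hcon
    have hlt : (c j0).card < n - 1 - j0.1 :=
      lt_of_le_of_ne (hcardle j0.1 j0.2) hj0
    have : ∑ j : Fin ℓ, (c j).card < ∑ j : Fin ℓ, (n - 1 - j.1) :=
      Finset.sum_lt_sum (fun i _ => hcardle i.1 i.2) ⟨j0, Finset.mem_univ _, hlt⟩
    omega
  have hsubset : ∀ j : Fin ℓ, c j ⊆ Finset.Icc 1 (n - 1 - j.1) := by
    intro j m hm
    rw [Finset.mem_Icc]
    have h1m := (hlet j m hm).1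
    refine ⟨h1m, ?_⟩
    have hmem : m ∈ (c ⟨j.1, j.2⟩).filter fun b => m ≤ b :=
      Finset.mem_filter.2 ⟨hm, le_rfl⟩
    have hpos : 1 ≤ ((c ⟨j.1, j.2⟩).filter fun b => m ≤ b).card :=
      Finset.card_pos.2 ⟨m, hmem⟩
    have h6 := chain j.1 j.2 m
    have h7 := hzero_le (m + j.1)
    omega
  funext j
  apply Finset.eq_of_subset_of_card_le (hsubset j)
  rw [Nat.card_Icc, hcardeq j]
  omega

/-- For `ℓ ≥ n-1`, the unique decreasing factorization `b ∈ 𝒲_{w₀}^ℓ` of the longest element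
`w₀ : i ↦ n+1-i` of `Sₙ` with `ẽᵢ(b) = 0` for all `1 ≤ i < ℓ` is the one whose `j`-th factor
(1-indexed) has content `{1, …, n-j}` (so `wʲ = s_{n-j} ⋯ s₁` for `1 ≤ j ≤ n-1` and `wʲ = 1`
for `j > n-1`); its weight is the staircase partition `(n-1, n-2, …, 1)` padded with zeros. -/
theorem highest_weight_unique (n ℓ : ℕ) (hn : 1 ≤ n) (hℓ : n - 1 ≤ ℓ) :
    IsDecFactorizationC n ℓ (Fin.revPerm : Equiv.Perm (Fin n))
        (fun j : Fin ℓ => Finset.Icc 1 (n - 1 - j.1)) ∧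
      (∀ j : Fin ℓ, (Finset.Icc 1 (n - 1 - j.1)).card = n - 1 - j.1) ∧
      ∀ c : Fin ℓ → Finset ℕ,
        IsDecFactorizationC n ℓ (Fin.revPerm : Equiv.Perm (Fin n)) c →
          ((∀ i : ℕ, 1 ≤ i → i < ℓ → eOp i c = none) ↔
            c = fun j : Fin ℓ => Finset.Icc 1 (n - 1 - j.1)) := by
  refine ⟨staircase_fact n ℓ hn hℓ, ?_, ?_⟩
  · intro j; rw [Nat.card_Icc]; omega
  · intro c hfact
    constructor
    · intro hE
      exact uniq n ℓ hn hℓ c hfact hE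
    · intro heq i h1i h2i
      subst heq
      rw [eOp_none_iff i _ h1i h2i]
      show Ldata (Finset.Icc 1 (n - 1 - i)) (Finset.Icc 1 (n - 1 - (i - 1))) = ∅
      by_cases hni : n - 1 - i = 0
      · rw [show Finset.Icc 1 (n - 1 - i) = ∅ by rw [hni]; simp]
        exact Ldata_empty_left _
      · rw [show n - 1 - (i - 1) = (n - 1 - i) + 1 by omega]
        exact Ldata_stair _

end
end
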